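/- arXiv:2501.02917 — 2 statements merged into one kernel-verified Lean document; each statement's English description precedes it below -/
import Mathlib

section
/- Let A^{nl}_τ be the adjacency matrix of the de Bruijn graph of order τ over alphabet X with all self-loops removed. Then for every τ ≥ 2, the largest eigenvalue satisfies λ(A^{nl}_{τ−1}) < λ(A^{nl}_τ). -/
open scoped BigOperators

/-- `s'` is a legal de Bruijn successor of `s`. -/
def deBruijnStep {X : Type*} {τ : ℕ} (s s' : Fin τ → X) : Prop :=
  ∀ i : Fin τ, ∀ h : i.1 + 1 < τ, s' ⟨i.1, by omega⟩ = s ⟨i.1 + 1, h⟩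

-- Adjacency matrix of the de Bruijn graph of order `τ` over `X`, self-loops removed.
open Classical in
noncomputable def deBruijnAdjNL (X : Type*) [Fintype X] (τ : ℕ) :
    Matrix (Fin τ → X) (Fin τ → X) ℝ :=
  fun s s' => if deBruijnStep s s' ∧ s' ≠ s then 1 else 0

/-- Largest (Perron) eigenvalue: supremum of the set of real eigenvalues. -/
noncomputable def maxEig {n : Type*} [Fintype n] [DecidableEq n] (A : Matrix n n ℝ) : ℝ :=
  sSup {μ : ℝ | Module.End.HasEigenvalue (Matrix.toLin' A) μ}

set_option linter.unusedSectionVars false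
set_option maxHeartbeats 1000000

namespace DBaux

section Generic

variable {I : Type*} [Fintype I] [DecidableEq I]

lemma hasEigen_of_vec (A : Matrix I I ℝ) {r : ℝ} {v : I → ℝ} (hv : v ≠ 0)
    (h : A.mulVec v = r • v) : Module.End.HasEigenvalue (Matrix.toLin' A) r := by
  apply Module.End.hasEigenvalue_of_hasEigenvector (x := v)
  refine ⟨?_, hv⟩
  rw [Module.End.mem_eigenspace_iff, Matrix.toLin'_apply, h]

lemma eig_le_of_pos_vec (A : Matrix I I ℝ) (hA : ∀ i j, 0 ≤ A i j) {r : ℝ} {v : I → ℝ}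
    (hv : ∀ i, 0 < v i) (h : A.mulVec v = r • v) {μ : ℝ}
    (hμ : Module.End.HasEigenvalue (Matrix.toLin' A) μ) : μ ≤ r := by
  obtain ⟨x, hx⟩ := hμ.exists_hasEigenvector
  have hxne : x ≠ 0 := hx.2
  have hxeq : A.mulVec x = μ • x := by
    have := hx.apply_eq_smul
    rwa [Matrix.toLin'_apply] at this
  obtain ⟨i0, hi0⟩ : ∃ i, x i ≠ 0 := by
    by_contra hc; push_neg at hc; exact hxne (funext hc)
  obtain ⟨i, -, hmax⟩ := Finset.exists_max_image Finset.univ (fun i => |x i| / v i)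
    ⟨i0, Finset.mem_univ i0⟩
  set c := |x i| / v i with hc
  have hcpos : 0 < c := lt_of_lt_of_le (div_pos (abs_pos.mpr hi0) (hv i0))
    (hmax i0 (Finset.mem_univ i0))
  have hbound : ∀ l, |x l| ≤ c * v l := by
    intro l
    have := hmax l (Finset.mem_univ l)
    calc |x l| = (|x l| / v l) * v l := (div_mul_cancel₀ _ (ne_of_gt (hv l))).symm
    _ ≤ c * v l := mul_le_mul_of_nonneg_right this (le_of_lt (hv l))
  have hxi : |x i| = c * v i := by exact (div_mul_cancel₀ _ (ne_of_gt (hv i))).symm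
  have h1 : μ * x i = ∑ l, A i l * x l := by
    have := congrFun hxeq i
    simp only [Matrix.mulVec, dotProduct, Pi.smul_apply, smul_eq_mul] at this
    exact this.symm
  have h2 : ∑ l, A i l * v l = r * v i := by
    have := congrFun h i
    simpa only [Matrix.mulVec, dotProduct, Pi.smul_apply, smul_eq_mul] using this
  have hchain : |μ| * |x i| ≤ r * |x i| := by
    calc |μ| * |x i| = |μ * x i| := (abs_mul μ (x i)).symm
    _ = |∑ l, A i l * x l| := by rw [h1]
    _ ≤ ∑ l, |A i l * x l| := Finset.abs_sum_le_sum_abs _ _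
    _ = ∑ l, A i l * |x l| := by
        apply Finset.sum_congr rfl; intro l _
        rw [abs_mul, abs_of_nonneg (hA i l)]
    _ ≤ ∑ l, A i l * (c * v l) := by
        apply Finset.sum_le_sum; intro l _
        exact mul_le_mul_of_nonneg_left (hbound l) (hA i l)
    _ = c * ∑ l, A i l * v l := by rw [Finset.mul_sum]; apply Finset.sum_congr rfl; intro l _; ring
    _ = c * (r * v i) := by rw [h2]
    _ = r * (c * v i) := by ring
    _ = r * |x i| := by rw [hxi]
  have hxipos : 0 < |x i| := by rw [hxi]; exact mul_pos hcpos (hv i)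
  have := le_of_mul_le_mul_right (by linarith [hchain] : |μ| * |x i| ≤ r * |x i|) hxipos
  exact le_trans (le_abs_self μ) this


end Generic


noncomputable def gp (Q r : ℝ) (k : ℕ) : ℝ := r^k - Q * ∑ j ∈ Finset.range k, r^j

lemma gp_zero (Q r : ℝ) : gp Q r 0 = 1 := by simp [gp]

lemma gp_succ (Q r : ℝ) (k : ℕ) : gp Q r (k+1) = r * gp Q r k - Q := by
  simp only [gp, pow_succ, geom_sum_succ]
  ring

lemma gp_pos (Q r : ℝ) (hQp : 0 < Q) (hr : 0 < r) {n : ℕ} (hroot : gp Q r n = 0) :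
    ∀ k < n, 0 < gp Q r k := by
  have key : ∀ j k, k + j + 1 = n → 0 < gp Q r k := by
    intro j
    induction j with
    | zero =>
      intro k hk
      have h1 : gp Q r (k+1) = 0 := by rw [show k+1 = n by omega]; exact hroot
      have h2 : r * gp Q r k = Q := by have := gp_succ Q r k; rw [h1] at this; linarith
      nlinarith
    | succ j ih =>
      intro k hk
      have h1 : 0 < gp Q r (k+1) := ih (k+1) (by omega)
      have h2 := gp_succ Q r k
      nlinarith
  intro k hk
  exact key (n - k - 1) k (by omega)

lemma gp_continuous (Q : ℝ) (k : ℕ) : Continuous fun r => gp Q r k := by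
  unfold gp; fun_prop

lemma gp_at_top (Q : ℝ) (k : ℕ) : gp Q (Q + 1) k = 1 := by
  have h := geom_sum_mul (Q + 1) k
  simp only [add_sub_cancel_right] at h
  simp only [gp]
  nlinarith [h]

lemma gp_at_Q (Q : ℝ) (hQ : 1 ≤ Q) {k : ℕ} (hk : 1 ≤ k) : gp Q Q k ≤ 0 := by
  have h1 : Q^(k-1) ≤ ∑ j ∈ Finset.range k, Q^j := by
    apply Finset.single_le_sum (f := fun j => Q^j) (fun i _ => by positivity)
    simp; omega
  have h2 : Q * Q^(k-1) = Q^k := by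
    rw [← pow_succ']; congr 1; omega
  have h3 : Q * Q^(k-1) ≤ Q * ∑ j ∈ Finset.range k, Q^j :=
    mul_le_mul_of_nonneg_left h1 (by linarith)
  simp only [gp]; nlinarith

/-- existence of roots r₁ < r₂ of gp at orders n and n+1. -/
lemma roots_exist (Q : ℝ) (hQ : 1 ≤ Q) (n : ℕ) (hn : 1 ≤ n) :
    ∃ r₁ r₂ : ℝ, Q ≤ r₁ ∧ r₁ < r₂ ∧ r₂ ≤ Q + 1 ∧ gp Q r₁ n = 0 ∧ gp Q r₂ (n+1) = 0 := by
  have hQ1 : Q ≤ Q + 1 := by linarith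
  have hc : ∀ m, ContinuousOn (fun r => gp Q r m) (Set.Icc Q (Q+1)) :=
    fun m => (gp_continuous Q m).continuousOn
  obtain ⟨r₁, hr₁mem, hr₁⟩ : ∃ r₁ ∈ Set.Icc Q (Q+1), gp Q r₁ n = 0 := by
    have := intermediate_value_Icc hQ1 (hc n)
    have h0 : (0:ℝ) ∈ Set.Icc (gp Q Q n) (gp Q (Q+1) n) := by
      constructor
      · exact gp_at_Q Q hQ hn
      · rw [gp_at_top]; norm_num
    obtain ⟨r, hr, hr0⟩ := this h0
    exact ⟨r, hr, hr0⟩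
  have hr₁le : r₁ ≤ Q + 1 := hr₁mem.2
  obtain ⟨r₂, hr₂mem, hr₂⟩ : ∃ r₂ ∈ Set.Icc r₁ (Q+1), gp Q r₂ (n+1) = 0 := by
    have := intermediate_value_Icc hr₁le ((gp_continuous Q (n+1)).continuousOn)
    have h0 : (0:ℝ) ∈ Set.Icc (gp Q r₁ (n+1)) (gp Q (Q+1) (n+1)) := by
      constructor
      · rw [gp_succ, hr₁]; ring_nf; linarith
      · rw [gp_at_top]; norm_num
    obtain ⟨r, hr, hr0⟩ := this h0
    exact ⟨r, hr, hr0⟩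
  refine ⟨r₁, r₂, hr₁mem.1, ?_, hr₂mem.2, hr₁, hr₂⟩
  rcases lt_or_eq_of_le hr₂mem.1 with h | h
  · exact h
  · exfalso
    rw [← h] at hr₂
    rw [gp_succ, hr₁] at hr₂
    linarith


variable {X : Type*} [Fintype X] [DecidableEq X]


def shiftW {n : ℕ} (s : Fin n → X) (a : X) : Fin n → X :=
  fun i => if h : i.1 + 1 < n then s ⟨i.1+1, h⟩ else a

noncomputable def dR {n : ℕ} (s : Fin n → X) : ℕ :=
  sInf {j | ∀ i : Fin n, j ≤ i.1 → ∀ hl : n - 1 < n, s i = s ⟨n-1, hl⟩}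

variable {n : ℕ} (hn : 0 < n) (s : Fin n → X)

lemma dR_nonempty : {j | ∀ i : Fin n, j ≤ i.1 → ∀ hl : n - 1 < n, s i = s ⟨n-1, hl⟩}.Nonempty :=
  ⟨n, fun i hi => absurd i.2 (by omega)⟩

include hn in
lemma dR_le : dR s ≤ n - 1 := by
  apply Nat.sInf_le
  intro i hi hl
  have : i = ⟨n-1, hl⟩ := Fin.ext (show i.1 = n - 1 by have := i.2; omega)
  rw [this]

include hn in
lemma dR_spec : ∀ i : Fin n, dR s ≤ i.1 → s i = s ⟨n-1, by omega⟩ := by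
  intro i hi
  exact Nat.sInf_mem (dR_nonempty s) i hi (by omega)

include hn in
lemma dR_min (h : 0 < dR s) : s ⟨dR s - 1, by have := dR_le hn s; omega⟩ ≠ s ⟨n-1, by omega⟩ := by
  have hdle := dR_le hn s
  have hlt : dR s - 1 < dR s := by omega
  have := Nat.notMem_of_lt_sInf (s := {j | ∀ i : Fin n, j ≤ i.1 → ∀ hl : n - 1 < n, s i = s ⟨n-1, hl⟩}) hlt
  simp only [Set.mem_setOf_eq, not_forall] at this
  obtain ⟨i, hi, hl, hne⟩ := this
  have hile : i.1 < dR s := by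
    by_contra hc
    exact hne (dR_spec hn s i (by omega))
  have : i = ⟨dR s - 1, by omega⟩ := Fin.ext (show i.1 = dR s - 1 by omega)
  rw [← this]
  intro hc; exact hne hc

lemma step_shiftW (a : X) : deBruijnStep s (shiftW s a) := by
  intro i h
  simp only [shiftW]
  rw [dif_pos h]

include hn in
lemma shiftW_last (a : X) : shiftW s a ⟨n-1, by omega⟩ = a := by
  simp only [shiftW]
  rw [dif_neg (by omega)]

include hn in
lemma step_eq {s' : Fin n → X} (h : deBruijnStep s s') :
    s' = shiftW s (s' ⟨n-1, by omega⟩) := by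
  funext i
  by_cases hi : i.1 + 1 < n
  · have := h i hi
    simp only [shiftW]
    rw [dif_pos hi, ← this]
  · have hieq : i = ⟨n-1, by omega⟩ := Fin.ext (show i.1 = n - 1 by have := i.2; omega)
    simp only [shiftW]
    rw [dif_neg hi, hieq]

include hn in
lemma dR_shift_ne (a : X) (ha : a ≠ s ⟨n-1, by omega⟩) : dR (shiftW s a) = n - 1 := by
  have hle := dR_le hn (shiftW s a)
  rcases Nat.eq_or_lt_of_le hle with h | h
  · omega
  · exfalso
    have hn2 : 2 ≤ n := by omega
    have hspec := dR_spec hn (shiftW s a) ⟨n-2, by omega⟩ (show dR (shiftW s a) ≤ n - 2 by omega)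
    rw [shiftW_last hn] at hspec
    have heq : shiftW s a ⟨n-2, by omega⟩ = s ⟨n-1, by omega⟩ := by
      simp only [shiftW]
      rw [dif_pos (show (n-2:ℕ)+1 < n by omega)]
      congr 1
      exact Fin.ext (show (n-2:ℕ)+1 = n-1 by omega)
    rw [heq] at hspec
    exact ha hspec.symm

include hn in
lemma dR_shift_eq : dR (shiftW s (s ⟨n-1, by omega⟩)) = dR s - 1 := by
  set L := s ⟨n-1, by omega⟩ with hL
  set s' := shiftW s L with hs'
  have hlast : s' ⟨n-1, by omega⟩ = L := shiftW_last hn s L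
  have h1 : dR s' ≤ dR s - 1 := by
    apply Nat.sInf_le
    intro i hi hl
    rw [hlast]
    show shiftW s L i = L
    by_cases hc : i.1 + 1 < n
    · simp only [shiftW]
      rw [dif_pos hc, hL]
      exact dR_spec hn s ⟨i.1+1, hc⟩ (show dR s ≤ i.1+1 by omega)
    · simp only [shiftW]
      rw [dif_neg hc]
  have h2 : dR s ≤ dR s' + 1 := by
    apply Nat.sInf_le
    intro i hi hl
    have hi1 : 1 ≤ i.1 := by omega
    have hj : i.1 - 1 + 1 < n := by have := i.2; omega
    have heq : s i = s' ⟨i.1 - 1, by omega⟩ := by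
      simp only [hs', shiftW]
      rw [dif_pos hj]
      congr 1
      exact Fin.ext (show i.1 = i.1 - 1 + 1 by omega)
    rw [heq, dR_spec hn s' ⟨i.1-1, by omega⟩ (show dR s' ≤ i.1 - 1 by omega), hlast, hL]
  omega

include hn in
lemma shift_self (h : dR s = 0) : shiftW s (s ⟨n-1, by omega⟩) = s := by
  funext i
  by_cases hc : i.1 + 1 < n
  · simp only [shiftW]
    rw [dif_pos hc, dR_spec hn s ⟨i.1+1, hc⟩ (by omega), dR_spec hn s i (by omega)]
  · simp only [shiftW]
    rw [dif_neg hc]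
    congr 1
    exact Fin.ext (show n - 1 = i.1 by have := i.2; omega)
  
include hn in
lemma shift_ne_self (h : 0 < dR s) : shiftW s (s ⟨n-1, by omega⟩) ≠ s := by
  intro hc
  have := dR_shift_eq hn s
  rw [hc] at this
  omega



noncomputable def vv (Q r : ℝ) {n : ℕ} (s : Fin n → X) : ℝ := gp Q r (n - 1 - dR s)

lemma sum_succ {n : ℕ} (hn : 0 < n) (s : Fin n → X) (F : (Fin n → X) → ℝ) :
    ∑ s', (deBruijnAdjNL X n) s s' * F s'
      = ∑ a : X, if shiftW s a ≠ s then F (shiftW s a) else 0 := by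
  have key : ∀ (P : Prop) (inst : Decidable P) (y : ℝ),
      (@ite ℝ P inst 1 0) * y = @ite ℝ P inst y 0 := by
    intro P inst y; split <;> simp
  simp only [deBruijnAdjNL, key]
  refine ((Finset.sum_subset (Finset.subset_univ (Finset.univ.image (shiftW s))) ?_).symm).trans ?_
  · intro s' _ hns'
    rw [if_neg]
    rintro ⟨hst, -⟩
    exact hns' (Finset.mem_image.mpr ⟨s' ⟨n-1, by omega⟩, Finset.mem_univ _, (step_eq hn s hst).symm⟩)
  · rw [Finset.sum_image (fun a _ b _ hab => by
      have ha := shiftW_last hn s a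
      have hb := shiftW_last hn s b
      rw [← ha, ← hb, hab])]
    apply Finset.sum_congr rfl
    intro a _
    by_cases h : shiftW s a = s
    · rw [if_neg (by simp [h]), if_neg (by simp [h])]
    · rw [if_pos ⟨step_shiftW s a, h⟩, if_pos h]

lemma mulVec_vv {n : ℕ} (hn : 0 < n) {Q r : ℝ}
    (hQcard : Q = (Fintype.card X : ℝ) - 1) (hcard : 2 ≤ Fintype.card X)
    (hroot : gp Q r n = 0) :
    (deBruijnAdjNL X n).mulVec (vv Q r) = r • (vv Q r) := by
  funext s
  simp only [Matrix.mulVec, dotProduct, Pi.smul_apply, smul_eq_mul]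
  rw [sum_succ hn s (vv Q r)]
  set L := s ⟨n-1, by omega⟩ with hL
  rw [← Finset.sum_erase_add _ _ (Finset.mem_univ L)]
  have hterm : ∀ a ∈ Finset.univ.erase L,
      (if shiftW s a ≠ s then vv Q r (shiftW s a) else 0) = 1 := by
    intro a ha
    have haL : a ≠ L := Finset.ne_of_mem_erase ha
    have hne : shiftW s a ≠ s := by
      intro hc
      apply haL
      rw [← shiftW_last hn s a, hc]
    rw [if_pos hne]
    unfold vv
    rw [dR_shift_ne hn s a haL, show n - 1 - (n-1) = 0 by omega, gp_zero]
  rw [Finset.sum_congr rfl hterm, Finset.sum_const, Finset.card_erase_of_mem (Finset.mem_univ L),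
    Finset.card_univ]
  have hQn : ((Fintype.card X - 1 : ℕ) : ℝ) = Q := by
    rw [hQcard, Nat.cast_sub (by omega)]; norm_num
  rw [nsmul_eq_mul, hQn, mul_one]
  -- main term at a = L
  by_cases hd : dR s = 0
  · rw [if_neg (by simp [hL, shift_self hn s hd])]
    unfold vv
    rw [hd, Nat.sub_zero]
    have h1 : gp Q r ((n-1)+1) = r * gp Q r (n-1) - Q := gp_succ Q r (n-1)
    rw [show (n-1)+1 = n by omega, hroot] at h1
    linarith
  · have hpos : 0 < dR s := by omega
    rw [if_pos (by rw [hL]; exact shift_ne_self hn s hpos)]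
    unfold vv
    rw [hL, dR_shift_eq hn s]
    have hle := dR_le hn s
    rw [show n - 1 - (dR s - 1) = (n - 1 - dR s) + 1 by omega, gp_succ]
    ring


lemma vv_pos {n : ℕ} (hn : 0 < n) {Q r : ℝ} (hQp : 0 < Q) (hr : 0 < r)
    (hroot : gp Q r n = 0) (s : Fin n → X) : 0 < vv Q r s :=
  gp_pos Q r hQp hr hroot _ (by have := dR_le hn s; omega)

lemma adj_nonneg (n : ℕ) : ∀ i j, 0 ≤ (deBruijnAdjNL X n) i j := by
  intro i j
  unfold deBruijnAdjNL
  split <;> norm_num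

end DBaux

open DBaux in
/-- The largest eigenvalue of the self-loop-free de Bruijn adjacency matrix is
strictly increasing in the order: for every `τ ≥ 2`,
`λ(A^{nl}_{τ−1}) < λ(A^{nl}_τ)`. -/
theorem deBruijnNL_eig_strict_mono (X : Type*) [Fintype X] [DecidableEq X]
    (hX : 2 ≤ Fintype.card X) (τ : ℕ) (hτ : 2 ≤ τ) :
    maxEig (deBruijnAdjNL X (τ - 1)) < maxEig (deBruijnAdjNL X τ) := by
  set q := Fintype.card X with hq
  set Q : ℝ := (q : ℝ) - 1 with hQdef
  have hQ1 : 1 ≤ Q := by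
    have : (2:ℝ) ≤ (q:ℝ) := by exact_mod_cast hX
    simp only [hQdef]; linarith
  have hQp : 0 < Q := by linarith
  set n₁ := τ - 1 with hn₁def
  have hn₁ : 0 < n₁ := by omega
  have hτeq : n₁ + 1 = τ := by omega
  obtain ⟨r₁, r₂, hQr₁, hr₁r₂, hr₂le, hroot₁, hroot₂'⟩ := roots_exist Q hQ1 n₁ hn₁
  have hroot₂ : gp Q r₂ τ = 0 := by rw [← hτeq]; exact hroot₂'
  have hr₁pos : 0 < r₁ := by linarith
  have hr₂pos : 0 < r₂ := by linarith
  have hτpos : 0 < τ := by omega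
  have hXne : Nonempty X := Fintype.card_pos_iff.mp (by omega)
  -- eigen data at order n₁
  have hmv₁ : (deBruijnAdjNL X n₁).mulVec (vv Q r₁) = r₁ • (vv Q r₁) :=
    mulVec_vv hn₁ (by rw [hQdef, hq]) hX hroot₁
  have hv₁pos : ∀ s, 0 < vv (X := X) Q r₁ (n := n₁) s :=
    fun s => vv_pos hn₁ hQp hr₁pos hroot₁ s
  -- eigen data at order τ
  have hmv₂ : (deBruijnAdjNL X τ).mulVec (vv Q r₂) = r₂ • (vv Q r₂) :=
    mulVec_vv hτpos (by rw [hQdef, hq]) hX hroot₂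
  have hv₂pos : ∀ s, 0 < vv (X := X) Q r₂ (n := τ) s :=
    fun s => vv_pos hτpos hQp hr₂pos hroot₂ s
  have hv₂ne : (vv (X := X) Q r₂ (n := τ)) ≠ 0 := by
    intro hc
    obtain ⟨s⟩ : Nonempty (Fin τ → X) := ⟨fun _ => Classical.arbitrary X⟩
    have := hv₂pos s
    rw [hc] at this
    simp at this
  -- upper bound for order n₁
  have hup : maxEig (deBruijnAdjNL X n₁) ≤ r₁ := by
    apply Real.sSup_le
    · intro μ hμ
      exact eig_le_of_pos_vec _ (adj_nonneg n₁) hv₁pos hmv₁ hμ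
    · linarith
  -- lower bound for order τ
  have hlow : r₂ ≤ maxEig (deBruijnAdjNL X τ) := by
    apply le_csSup
    · exact ⟨r₂, fun μ hμ => eig_le_of_pos_vec _ (adj_nonneg τ) hv₂pos hmv₂ hμ⟩
    · exact hasEigen_of_vec _ hv₂ne hmv₂
  calc maxEig (deBruijnAdjNL X n₁) ≤ r₁ := hup
  _ < r₂ := hr₁r₂
  _ ≤ maxEig (deBruijnAdjNL X τ) := hlow
end

section
/- The largest eigenvalue of the self-loop-free de Bruijn adjacency matrix A^{nl}_τ over alphabet X satisfies |X| − 1 ≤ λ(A^{nl}_τ) ≤ |X|, and hence the noiseless no-self-loop capacity C_τ = log_{|X|} λ(A^{nl}_τ) satisfies log_{|X|}(|X|−1) ≤ C_τ ≤ 1; moreover lim_{τ→∞} C_τ = 1. -/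
open scoped BigOperators

section Aux

set_option linter.unusedSectionVars false
variable {X : Type*} [Fintype X] [DecidableEq X] {τ : ℕ}

def shiftc (c : X) (s : Fin τ → X) : Fin τ → X :=
  fun i => if h : i.1 + 1 < τ then s ⟨i.1 + 1, h⟩ else c

lemma step_shiftc (c : X) (s : Fin τ → X) : deBruijnStep s (shiftc c s) := by
  intro i h
  simp only [shiftc]
  rw [dif_pos h]

lemma shiftc_last (hτ : 0 < τ) (c : X) (s : Fin τ → X) :
    shiftc c s ⟨τ - 1, by omega⟩ = c := by
  simp only [shiftc]
  rw [dif_neg (by omega)]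

lemma step_eq_shiftc (hτ : 0 < τ) {s s' : Fin τ → X} (h : deBruijnStep s s') :
    s' = shiftc (s' ⟨τ - 1, by omega⟩) s := by
  funext i
  by_cases hi : i.1 + 1 < τ
  · have h1 := h i hi
    simp only [shiftc]
    rw [dif_pos hi, ← h1]
  · have hi2 := i.2
    have hie : i = ⟨τ - 1, by omega⟩ := Fin.ext (by simp; omega)
    simp only [shiftc]
    rw [dif_neg hi, hie]

lemma shiftc_injective (hτ : 0 < τ) (s : Fin τ → X) :
    Function.Injective (fun c : X => shiftc c s) := by
  intro a b hab
  have := congrFun hab ⟨τ - 1, by omega⟩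
  simpa [shiftc_last hτ] using this

-- The least index from which `s` is constant (equal to its last entry).
open Classical in
noncomputable def runm (hτ : 0 < τ) (s : Fin τ → X) : ℕ :=
  Nat.find (p := fun m => ∀ i : Fin τ, m ≤ i.1 → s i = s ⟨τ - 1, by omega⟩)
    ⟨τ - 1, fun i hi => by have h2 := i.2; congr 1; exact Fin.ext (by simp; omega)⟩

open Classical in
lemma runm_le (hτ : 0 < τ) (s : Fin τ → X) : runm hτ s ≤ τ - 1 :=
  Nat.find_min' _ (fun i hi => by have h2 := i.2; congr 1; exact Fin.ext (by simp; omega))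

open Classical in
lemma runm_spec (hτ : 0 < τ) (s : Fin τ → X) :
    ∀ i : Fin τ, runm hτ s ≤ i.1 → s i = s ⟨τ - 1, by omega⟩ :=
  Nat.find_spec (p := fun m => ∀ i : Fin τ, m ≤ i.1 → s i = s ⟨τ - 1, by omega⟩) _

open Classical in
lemma runm_min (hτ : 0 < τ) (s : Fin τ → X) {k : ℕ} (hk : k < runm hτ s) :
    ¬ (∀ i : Fin τ, k ≤ i.1 → s i = s ⟨τ - 1, by omega⟩) :=
  Nat.find_min _ hk

open Classical in
lemma runm_eq_zero_iff (hτ : 0 < τ) (s : Fin τ → X) :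
    runm hτ s = 0 ↔ ∀ i : Fin τ, s i = s ⟨τ - 1, by omega⟩ := by
  rw [runm, Nat.find_eq_zero]
  exact ⟨fun h i => h i (Nat.zero_le _), fun h i _ => h i⟩


lemma const_of_selfstep (hτ : 0 < τ) {s : Fin τ → X}
    (h : ∀ i : Fin τ, ∀ hh : i.1 + 1 < τ, s i = s ⟨i.1 + 1, hh⟩) :
    ∀ i : Fin τ, s i = s ⟨τ - 1, by omega⟩ := by
  have key : ∀ k : ℕ, ∀ i : Fin τ, τ - 1 - k ≤ i.1 → s i = s ⟨τ - 1, by omega⟩ := by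
    intro k
    induction k with
    | zero =>
      intro i hi
      have hi2 := i.2
      have : i = ⟨τ - 1, by omega⟩ := Fin.ext (by simp; omega)
      rw [this]
    | succ k ih =>
      intro i hi
      by_cases hik : τ - 1 - k ≤ i.1
      · exact ih i hik
      · have hh : i.1 + 1 < τ := by omega
        rw [h i hh]
        exact ih ⟨i.1 + 1, hh⟩ (by simp; omega)
  intro i
  exact key τ i (by omega)

lemma shiftc_eq_self_iff (hτ : 0 < τ) (c : X) (s : Fin τ → X) :
    shiftc c s = s ↔ (runm hτ s = 0 ∧ c = s ⟨τ - 1, by omega⟩) := by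
  constructor
  · intro h
    have hc : c = s ⟨τ - 1, by omega⟩ := by
      rw [← shiftc_last hτ c s, h]
    refine ⟨(runm_eq_zero_iff hτ s).2 (const_of_selfstep hτ ?_), hc⟩
    intro i hh
    have := congrFun h i
    simp only [shiftc] at this
    rw [dif_pos hh] at this
    rw [← this]
  · rintro ⟨h0, hc⟩
    have hconst := (runm_eq_zero_iff hτ s).1 h0
    funext i
    simp only [shiftc]
    by_cases hh : i.1 + 1 < τ
    · rw [dif_pos hh, hconst ⟨i.1 + 1, hh⟩, hconst i]
    · rw [dif_neg hh, hc]
      have hi2 := i.2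
      congr 1
      exact Fin.ext (by simp; omega)

lemma runm_shiftc_of_ne (hτ : 0 < τ) {c : X} (s : Fin τ → X)
    (hc : c ≠ s ⟨τ - 1, by omega⟩) : runm hτ (shiftc c s) = τ - 1 := by
  refine le_antisymm (runm_le hτ _) ?_
  by_contra hlt
  push_neg at hlt
  have h2 : 2 ≤ τ := by omega
  have hspec := runm_spec hτ (shiftc c s) ⟨τ - 2, by omega⟩ (by simp; omega)
  rw [shiftc_last hτ] at hspec
  simp only [shiftc] at hspec
  rw [dif_pos (show τ - 2 + 1 < τ by omega)] at hspec
  apply hc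
  rw [← hspec]
  congr 1
  exact Fin.ext (by simp; omega)

lemma runm_shiftc_of_eq (hτ : 0 < τ) (s : Fin τ → X)
    (hm : 1 ≤ runm hτ s) :
    runm hτ (shiftc (s ⟨τ - 1, by omega⟩) s) = runm hτ s - 1 := by
  set L := s ⟨τ - 1, by omega⟩ with hL
  have hmle := runm_le hτ s
  have hlast : shiftc L s ⟨τ - 1, by omega⟩ = L := shiftc_last hτ L s
  refine le_antisymm ?_ ?_
  · -- runm (shiftc L s) ≤ runm s - 1
    apply Nat.find_min'
    intro i hi
    rw [hlast]
    simp only [shiftc]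
    by_cases hh : i.1 + 1 < τ
    · rw [dif_pos hh]
      exact runm_spec hτ s ⟨i.1 + 1, hh⟩ (by simp; omega)
    · rw [dif_neg hh]
  · -- runm s - 1 ≤ runm (shiftc L s)
    by_contra hlt
    push_neg at hlt
    -- then shiftc L s is constant from runm s - 2 on; in particular at index runm s - 1 ... 
    have hwit : s ⟨runm hτ s - 1, by omega⟩ ≠ L := by
      intro hbad
      apply runm_min hτ s (show runm hτ s - 1 < runm hτ s by omega)
      intro i hi
      rcases Nat.lt_or_ge i.1 (runm hτ s) with h' | h'
      · have : i = ⟨runm hτ s - 1, by omega⟩ := Fin.ext (by simp; omega)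
        rw [this, hbad]
      · exact runm_spec hτ s i h'
    apply hwit
    have := runm_spec hτ (shiftc L s) ⟨runm hτ s - 2, by omega⟩ (by simp; omega)
    rw [hlast] at this
    simp only [shiftc] at this
    rw [dif_pos (show runm hτ s - 2 + 1 < τ by omega)] at this
    rw [← this]
    congr 1
    exact Fin.ext (by simp; omega)

end Aux

lemma deBruijn_hasEigen {X : Type*} [Fintype X] [DecidableEq X] (hX : 2 ≤ Fintype.card X)
    {τ : ℕ} (hτ : 0 < τ) {l : ℝ} (hl : 1 ≤ l)
    (hroot : l ^ τ = ((Fintype.card X : ℝ) - 1) * ∑ k ∈ Finset.range τ, l ^ k) :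
    Module.End.HasEigenvalue (Matrix.toLin' (deBruijnAdjNL X τ)) l := by
  classical
  set q : ℝ := (Fintype.card X : ℝ) with hq
  set G : ℝ := ∑ k ∈ Finset.range τ, l ^ k with hG
  set V : (Fin τ → X) → ℝ := fun s => ∑ j ∈ Finset.range (runm hτ s + 1), l ^ (τ - 1 - j) with hV
  have hmul : ∀ s, (deBruijnAdjNL X τ).mulVec V s = l * V s := by
    intro s
    set L := s ⟨τ - 1, by omega⟩ with hL
    have step1 : (deBruijnAdjNL X τ).mulVec V s
        = ∑ c : X, if shiftc c s ≠ s then V (shiftc c s) else 0 := by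
      rw [Matrix.mulVec, dotProduct]
      calc ∑ s', deBruijnAdjNL X τ s s' * V s'
          = ∑ s' ∈ Finset.univ.image (fun c : X => shiftc c s),
              deBruijnAdjNL X τ s s' * V s' := by
            refine (Finset.sum_subset (Finset.subset_univ _) ?_).symm
            intro x _ hx
            have hstep : ¬ deBruijnStep s x := fun hst =>
              hx (Finset.mem_image.2 ⟨x ⟨τ - 1, by omega⟩, Finset.mem_univ _,
                (step_eq_shiftc hτ hst).symm⟩)
            simp only [deBruijnAdjNL]
            rw [if_neg (fun hc => hstep hc.1), zero_mul]
        _ = ∑ c : X, deBruijnAdjNL X τ s (shiftc c s) * V (shiftc c s) :=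
            Finset.sum_image (fun a _ b _ h => shiftc_injective hτ s h)
        _ = ∑ c : X, if shiftc c s ≠ s then V (shiftc c s) else 0 := by
            refine Finset.sum_congr rfl fun c _ => ?_
            by_cases hc : shiftc c s = s
            · simp only [deBruijnAdjNL]
              rw [if_neg (fun hcc => hcc.2 hc), if_neg (not_not.2 hc), zero_mul]
            · simp only [deBruijnAdjNL]
              rw [if_pos ⟨step_shiftc c s, hc⟩, if_pos hc, one_mul]
    have hLsum : (∑ c : X, if shiftc c s ≠ s then V (shiftc c s) else 0)
        = (q - 1) * G + (if shiftc L s ≠ s then V (shiftc L s) else 0) := by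
      rw [← Finset.sum_erase_add _ _ (Finset.mem_univ L)]
      congr 1
      have hterm : ∀ c ∈ Finset.univ.erase L,
          (if shiftc c s ≠ s then V (shiftc c s) else 0) = G := by
        intro c hc
        have hcL : c ≠ L := (Finset.mem_erase.1 hc).1
        have hne : shiftc c s ≠ s := fun h => hcL (((shiftc_eq_self_iff hτ c s).1 h).2)
        rw [if_pos hne]
        show ∑ j ∈ Finset.range (runm hτ (shiftc c s) + 1), l ^ (τ - 1 - j) = G
        rw [runm_shiftc_of_ne hτ s hcL, show τ - 1 + 1 = τ by omega, hG]
        exact Finset.sum_range_reflect (fun k => l ^ k) τ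
      rw [Finset.sum_congr rfl hterm, Finset.sum_const,
        Finset.card_erase_of_mem (Finset.mem_univ L), Finset.card_univ, nsmul_eq_mul,
        Nat.cast_sub (by omega), Nat.cast_one]
    rw [step1, hLsum]
    by_cases h0 : runm hτ s = 0
    · have hss : shiftc L s = s := (shiftc_eq_self_iff hτ L s).2 ⟨h0, rfl⟩
      rw [if_neg (not_not.2 hss), add_zero, ← hroot]
      have hVs : V s = l ^ (τ - 1) := by simp [hV, h0]
      rw [hVs, ← pow_succ']
      congr 1
      omega
    · have hss : shiftc L s ≠ s := fun h => h0 ((shiftc_eq_self_iff hτ L s).1 h).1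
      rw [if_pos hss]
      have hrun : runm hτ (shiftc L s) = runm hτ s - 1 := runm_shiftc_of_eq hτ s (by omega)
      set m := runm hτ s with hm
      have hmle : m ≤ τ - 1 := runm_le hτ s
      have hVs : l * V s = ∑ j ∈ Finset.range (m + 1), l ^ (τ - j) := by
        rw [hV, Finset.mul_sum]
        refine Finset.sum_congr rfl fun j hj => ?_
        have hj' : j ≤ τ - 1 := by
          have := Finset.mem_range.1 hj; omega
        rw [← pow_succ']
        congr 1
        omega
      have hVL : V (shiftc L s) = ∑ j ∈ Finset.range m, l ^ (τ - 1 - j) := by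
        show ∑ j ∈ Finset.range (runm hτ (shiftc L s) + 1), l ^ (τ - 1 - j) = _
        rw [hrun, Nat.sub_add_cancel (by omega : 1 ≤ m)]
      rw [hVL, hVs, Finset.sum_range_succ' (fun j => l ^ (τ - j)) m]
      have hre : ∑ j ∈ Finset.range m, l ^ (τ - (j + 1))
          = ∑ j ∈ Finset.range m, l ^ (τ - 1 - j) :=
        Finset.sum_congr rfl fun j _ => by congr 1; omega
      rw [hre, Nat.sub_zero, hroot]
      ring
  have hlpos : (0:ℝ) < l := by linarith
  have hVne : V ≠ 0 := by
    have hne : Nonempty X := Fintype.card_pos_iff.1 (by omega)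
    obtain ⟨x⟩ := hne
    intro h
    have h1 := congrFun h (fun _ => x)
    have hpos : 0 < V (fun _ => x) := by
      refine Finset.sum_pos (fun j _ => pow_pos hlpos _) (by simp)
    rw [h1] at hpos
    exact lt_irrefl _ hpos
  refine Module.End.hasEigenvalue_of_hasEigenvector (x := V) ⟨?_, hVne⟩
  rw [Module.End.mem_eigenspace_iff, Matrix.toLin'_apply]
  funext s
  rw [hmul s, Pi.smul_apply, smul_eq_mul]

lemma deBruijnAdjNL_nonneg {X : Type*} [Fintype X] {τ : ℕ} (s s' : Fin τ → X) :
    0 ≤ deBruijnAdjNL X τ s s' := by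
  simp only [deBruijnAdjNL]
  split_ifs <;> norm_num

lemma deBruijn_rowsum_le {X : Type*} [Fintype X] [DecidableEq X] {τ : ℕ} (hτ : 0 < τ)
    (s : Fin τ → X) : ∑ s', deBruijnAdjNL X τ s s' ≤ (Fintype.card X : ℝ) := by
  classical
  have h2 : (∑ s', if deBruijnStep s s' then (1:ℝ) else 0) = (Fintype.card X : ℝ) := by
    calc (∑ s', if deBruijnStep s s' then (1:ℝ) else 0)
        = ∑ s' ∈ Finset.univ.image (fun c : X => shiftc c s),
            (if deBruijnStep s s' then (1:ℝ) else 0) := by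
          refine (Finset.sum_subset (Finset.subset_univ _) ?_).symm
          intro x _ hx
          refine if_neg (fun hst => hx ?_)
          exact Finset.mem_image.2 ⟨x ⟨τ - 1, by omega⟩, Finset.mem_univ _,
            (step_eq_shiftc hτ hst).symm⟩
      _ = ∑ c : X, (if deBruijnStep s (shiftc c s) then (1:ℝ) else 0) :=
          Finset.sum_image (fun a _ b _ h => shiftc_injective hτ s h)
      _ = ∑ _c : X, (1:ℝ) := Finset.sum_congr rfl fun c _ => if_pos (step_shiftc c s)
      _ = (Fintype.card X : ℝ) := by simp
  calc ∑ s', deBruijnAdjNL X τ s s'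
      ≤ ∑ s', if deBruijnStep s s' then (1:ℝ) else 0 := by
        refine Finset.sum_le_sum fun s' _ => ?_
        simp only [deBruijnAdjNL]
        split_ifs with h1 h2 <;> first | exact absurd h1.1 h2 | norm_num
    _ = (Fintype.card X : ℝ) := h2

lemma deBruijn_eig_le {X : Type*} [Fintype X] [DecidableEq X] (hX : 2 ≤ Fintype.card X)
    {τ : ℕ} (hτ : 0 < τ) {μ : ℝ}
    (hμ : Module.End.HasEigenvalue (Matrix.toLin' (deBruijnAdjNL X τ)) μ) :
    μ ≤ (Fintype.card X : ℝ) := by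
  classical
  obtain ⟨v, hv⟩ := hμ.exists_hasEigenvector
  have hv1 : (deBruijnAdjNL X τ).mulVec v = μ • v := by
    rw [← Matrix.toLin'_apply]
    exact hv.apply_eq_smul
  have hXne : Nonempty X := Fintype.card_pos_iff.1 (by omega)
  have hne : (Finset.univ : Finset (Fin τ → X)).Nonempty := Finset.univ_nonempty
  obtain ⟨i, -, hi⟩ := Finset.exists_max_image Finset.univ (fun j => |v j|) hne
  have hvi : 0 < |v i| := by
    obtain ⟨j, hj⟩ := Function.ne_iff.mp hv.right
    have : (0:ℝ) < |v j| := abs_pos.2 (by simpa using hj)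
    exact lt_of_lt_of_le this (hi j (Finset.mem_univ j))
  have hrow := deBruijn_rowsum_le (X := X) hτ i
  have key : |μ| * |v i| ≤ (Fintype.card X : ℝ) * |v i| := by
    have h1 : μ * v i = ∑ j, deBruijnAdjNL X τ i j * v j := by
      have := congrFun hv1 i
      rw [Pi.smul_apply, smul_eq_mul] at this
      rw [← this]
      rfl
    calc |μ| * |v i| = |μ * v i| := (abs_mul μ (v i)).symm
      _ = |∑ j, deBruijnAdjNL X τ i j * v j| := by rw [h1]
      _ ≤ ∑ j, |deBruijnAdjNL X τ i j * v j| := Finset.abs_sum_le_sum_abs _ _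
      _ = ∑ j, deBruijnAdjNL X τ i j * |v j| := by
          refine Finset.sum_congr rfl fun j _ => ?_
          rw [abs_mul, abs_of_nonneg (deBruijnAdjNL_nonneg i j)]
      _ ≤ ∑ j, deBruijnAdjNL X τ i j * |v i| := by
          refine Finset.sum_le_sum fun j _ => ?_
          exact mul_le_mul_of_nonneg_left (hi j (Finset.mem_univ j)) (deBruijnAdjNL_nonneg i j)
      _ = (∑ j, deBruijnAdjNL X τ i j) * |v i| := by rw [Finset.sum_mul]
      _ ≤ (Fintype.card X : ℝ) * |v i| := by
          exact mul_le_mul_of_nonneg_right hrow (abs_nonneg _)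
  have habs : |μ| ≤ (Fintype.card X : ℝ) := le_of_mul_le_mul_right key hvi
  exact le_trans (le_abs_self μ) habs

lemma geom_ineq {q x : ℝ} {τ : ℕ} (hq : 2 ≤ q) (hτ : 0 < τ) (hx1 : 1 ≤ x)
    (hcond : q - 1 ≤ x ^ τ * (q - x)) :
    x ^ τ ≤ (q - 1) * ∑ k ∈ Finset.range τ, x ^ k := by
  rcases eq_or_lt_of_le hx1 with h | h
  · rw [← h]
    simp only [one_pow, Finset.sum_const, Finset.card_range, nsmul_eq_mul, mul_one]
    have : (1:ℝ) ≤ τ := by exact_mod_cast hτ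
    nlinarith
  · have hg : (∑ k ∈ Finset.range τ, x ^ k) * (x - 1) = x ^ τ - 1 := geom_sum_mul x τ
    have hxp : (0:ℝ) < x ^ τ := pow_pos (by linarith) τ
    have key : 0 ≤ ((q - 1) * (∑ k ∈ Finset.range τ, x ^ k) - x ^ τ) * (x - 1) := by
      nlinarith [hg, hcond]
    have := (mul_nonneg_iff_of_pos_right (sub_pos.2 h)).1 key
    linarith

lemma exists_root {q x : ℝ} {τ : ℕ} (hq : 2 ≤ q) (hτ : 0 < τ) (hx1 : 1 ≤ x) (hxq : x ≤ q)
    (hcond : q - 1 ≤ x ^ τ * (q - x)) :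
    ∃ l, x ≤ l ∧ l ≤ q ∧ l ^ τ = (q - 1) * ∑ k ∈ Finset.range τ, l ^ k := by
  set f : ℝ → ℝ := fun y => y ^ τ - (q - 1) * ∑ k ∈ Finset.range τ, y ^ k with hf
  have hcont : ContinuousOn f (Set.Icc x q) := Continuous.continuousOn (by fun_prop)
  have hfx : f x ≤ 0 := by
    have := geom_ineq hq hτ hx1 hcond
    simp only [hf]
    linarith
  have hfq : f q = 1 := by
    have hg : (∑ k ∈ Finset.range τ, q ^ k) * (q - 1) = q ^ τ - 1 := geom_sum_mul q τ
    simp only [hf]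
    nlinarith [hg]
  have h0mem : (0:ℝ) ∈ Set.Icc (f x) (f q) := ⟨hfx, by rw [hfq]; norm_num⟩
  obtain ⟨l, hlm, hl0⟩ := intermediate_value_Icc hxq hcont h0mem
  refine ⟨l, hlm.1, hlm.2, ?_⟩
  have : l ^ τ - (q - 1) * ∑ k ∈ Finset.range τ, l ^ k = 0 := hl0
  linarith

lemma deBruijn_bddAbove {X : Type*} [Fintype X] [DecidableEq X] (hX : 2 ≤ Fintype.card X)
    {τ : ℕ} (hτ : 0 < τ) :
    BddAbove {μ : ℝ | Module.End.HasEigenvalue (Matrix.toLin' (deBruijnAdjNL X τ)) μ} :=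
  ⟨(Fintype.card X : ℝ), fun _ hμ => deBruijn_eig_le hX hτ hμ⟩

lemma deBruijn_maxEig_ge {X : Type*} [Fintype X] [DecidableEq X] (hX : 2 ≤ Fintype.card X)
    {τ : ℕ} (hτ : 0 < τ) {x : ℝ} (hx1 : 1 ≤ x) (hxq : x ≤ (Fintype.card X : ℝ))
    (hcond : (Fintype.card X : ℝ) - 1 ≤ x ^ τ * ((Fintype.card X : ℝ) - x)) :
    x ≤ maxEig (deBruijnAdjNL X τ) := by
  have hq : (2:ℝ) ≤ (Fintype.card X : ℝ) := by exact_mod_cast hX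
  obtain ⟨l, hxl, hlq, hroot⟩ := exists_root hq hτ hx1 hxq hcond
  have he := deBruijn_hasEigen hX hτ (le_trans hx1 hxl) hroot
  exact le_trans hxl (le_csSup (deBruijn_bddAbove hX hτ) he)

lemma deBruijn_cond_base {X : Type*} [Fintype X] [DecidableEq X] (hX : 2 ≤ Fintype.card X)
    {τ : ℕ} (hτ : 0 < τ) :
    (Fintype.card X : ℝ) - 1 ≤ ((Fintype.card X : ℝ) - 1) ^ τ
      * ((Fintype.card X : ℝ) - ((Fintype.card X : ℝ) - 1)) := by
  have hq : (2:ℝ) ≤ (Fintype.card X : ℝ) := by exact_mod_cast hX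
  have h1 : (Fintype.card X : ℝ) - ((Fintype.card X : ℝ) - 1) = 1 := by ring
  rw [h1, mul_one]
  exact le_self_pow₀ (by linarith) (by omega)

lemma deBruijn_maxEig_ge_base {X : Type*} [Fintype X] [DecidableEq X] (hX : 2 ≤ Fintype.card X)
    {τ : ℕ} (hτ : 0 < τ) :
    (Fintype.card X : ℝ) - 1 ≤ maxEig (deBruijnAdjNL X τ) := by
  have hq : (2:ℝ) ≤ (Fintype.card X : ℝ) := by exact_mod_cast hX
  exact deBruijn_maxEig_ge hX hτ (by linarith) (by linarith) (deBruijn_cond_base hX hτ)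

lemma deBruijn_maxEig_le {X : Type*} [Fintype X] [DecidableEq X] (hX : 2 ≤ Fintype.card X)
    {τ : ℕ} (hτ : 0 < τ) :
    maxEig (deBruijnAdjNL X τ) ≤ (Fintype.card X : ℝ) := by
  have hq : (2:ℝ) ≤ (Fintype.card X : ℝ) := by exact_mod_cast hX
  obtain ⟨l, hxl, hlq, hroot⟩ := exists_root hq hτ (x := (Fintype.card X : ℝ) - 1)
    (by linarith) (by linarith) (deBruijn_cond_base hX hτ)
  have he := deBruijn_hasEigen hX hτ (by linarith) hroot
  exact csSup_le ⟨l, he⟩ (fun μ hμ => deBruijn_eig_le hX hτ hμ)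

/-- The largest eigenvalue of the self-loop-free de Bruijn adjacency matrix
satisfies `|X| − 1 ≤ λ(A^{nl}_τ) ≤ |X|`; hence the noiseless no-self-loop capacity
`C_τ = log_{|X|} λ(A^{nl}_τ)` satisfies `log_{|X|}(|X|−1) ≤ C_τ ≤ 1`, and moreover
`C_τ → 1` as `τ → ∞`. -/
theorem deBruijnNL_capacity (X : Type*) [Fintype X] [DecidableEq X]
    (hX : 2 ≤ Fintype.card X) :
    (∀ τ : ℕ, 1 ≤ τ →
      ((Fintype.card X : ℝ) - 1 ≤ maxEig (deBruijnAdjNL X τ) ∧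
        maxEig (deBruijnAdjNL X τ) ≤ (Fintype.card X : ℝ) ∧
        Real.logb (Fintype.card X) ((Fintype.card X : ℝ) - 1)
          ≤ Real.logb (Fintype.card X) (maxEig (deBruijnAdjNL X τ)) ∧
        Real.logb (Fintype.card X) (maxEig (deBruijnAdjNL X τ)) ≤ 1)) ∧
      Filter.Tendsto (fun τ : ℕ => Real.logb (Fintype.card X) (maxEig (deBruijnAdjNL X τ)))
        Filter.atTop (nhds 1) := by
  have hq : (2:ℝ) ≤ (Fintype.card X : ℝ) := by exact_mod_cast hX
  have hb : (1:ℝ) < (Fintype.card X : ℝ) := by linarith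
  constructor
  · intro τ hτ1
    have hτ : 0 < τ := hτ1
    have hge := deBruijn_maxEig_ge_base hX hτ
    have hle := deBruijn_maxEig_le hX hτ
    refine ⟨hge, hle, ?_, ?_⟩
    · exact Real.logb_le_logb_of_le hb (by linarith) hge
    · calc Real.logb (Fintype.card X) (maxEig (deBruijnAdjNL X τ))
          ≤ Real.logb (Fintype.card X) (Fintype.card X) :=
            Real.logb_le_logb_of_le hb (by linarith) hle
        _ = 1 := Real.logb_self_eq_one hb
  · set q : ℝ := (Fintype.card X : ℝ) with hqdef
    have h45 : Filter.Tendsto (fun τ : ℕ => (4/5:ℝ) ^ τ) Filter.atTop (nhds 0) :=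
      tendsto_pow_atTop_nhds_zero_of_lt_one (by norm_num) (by norm_num)
    have hlow : Filter.Tendsto (fun τ : ℕ => q - (q - 1) * (4/5:ℝ) ^ τ)
        Filter.atTop (nhds q) := by
      have h2 := ((h45.const_mul (q - 1)).const_sub q)
      simpa using h2
    have hc : ContinuousAt (fun x : ℝ => Real.logb q x) q := by
      simp only [Real.logb]
      exact (Real.continuousAt_log (by linarith)).div_const _
    have hlog : Filter.Tendsto (fun τ : ℕ => Real.logb q (q - (q - 1) * (4/5:ℝ) ^ τ))
        Filter.atTop (nhds 1) := by
      have h2 := hc.tendsto.comp hlow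
      simp only [Function.comp_def] at h2
      rwa [Real.logb_self_eq_one hb] at h2
    have hx_lb : ∀ τ : ℕ, 2 ≤ τ → (5/4 : ℝ) ≤ q - (q - 1) * (4/5:ℝ) ^ τ := by
      intro τ hτ2
      have ht : (4/5:ℝ) ^ τ ≤ (4/5:ℝ) ^ 2 :=
        pow_le_pow_of_le_one (by norm_num) (by norm_num) hτ2
      nlinarith [pow_nonneg (by norm_num : (0:ℝ) ≤ 4/5) τ]
    have hlower : ∀ᶠ τ : ℕ in Filter.atTop,
        Real.logb q (q - (q - 1) * (4/5:ℝ) ^ τ)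
          ≤ Real.logb q (maxEig (deBruijnAdjNL X τ)) := by
      refine Filter.eventually_atTop.2 ⟨2, fun τ hτ2 => ?_⟩
      have hτ : 0 < τ := by omega
      set x : ℝ := q - (q - 1) * (4/5:ℝ) ^ τ with hx
      clear_value x
      have hx54 : (5/4:ℝ) ≤ x := by rw [hx]; exact hx_lb τ hτ2
      have hge : x ≤ maxEig (deBruijnAdjNL X τ) := by
        refine deBruijn_maxEig_ge hX hτ (by linarith) ?_ ?_
        · have : (0:ℝ) ≤ (q - 1) * (4/5:ℝ) ^ τ :=
            mul_nonneg (by linarith) (pow_nonneg (by norm_num) τ)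
          simp only [hx]
          linarith
        · have hqx : q - x = (q - 1) * (4/5:ℝ) ^ τ := by simp only [hx]; ring
          have hxt : (5/4:ℝ) ^ τ ≤ x ^ τ := pow_le_pow_left₀ (by norm_num) hx54 τ
          have hone : (5/4:ℝ) ^ τ * (4/5:ℝ) ^ τ = 1 := by
            rw [← mul_pow]; norm_num
          have h1le : 1 ≤ x ^ τ * (4/5:ℝ) ^ τ := by
            calc (1:ℝ) = (5/4:ℝ) ^ τ * (4/5:ℝ) ^ τ := hone.symm
              _ ≤ x ^ τ * (4/5:ℝ) ^ τ :=
                mul_le_mul_of_nonneg_right hxt (pow_nonneg (by norm_num) τ)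
          rw [hqx]
          calc q - 1 = (q - 1) * 1 := by ring
            _ ≤ (q - 1) * (x ^ τ * (4/5:ℝ) ^ τ) :=
              mul_le_mul_of_nonneg_left h1le (by linarith)
            _ = x ^ τ * ((q - 1) * (4/5:ℝ) ^ τ) := by ring
      exact Real.logb_le_logb_of_le hb (by linarith) hge
    have hupper : ∀ᶠ τ : ℕ in Filter.atTop,
        Real.logb q (maxEig (deBruijnAdjNL X τ)) ≤ 1 := by
      refine Filter.eventually_atTop.2 ⟨1, fun τ hτ1 => ?_⟩
      have hτ : 0 < τ := hτ1
      calc Real.logb q (maxEig (deBruijnAdjNL X τ)) ≤ Real.logb q q :=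
          Real.logb_le_logb_of_le hb
            (by have := deBruijn_maxEig_ge_base hX hτ; linarith)
            (deBruijn_maxEig_le hX hτ)
        _ = 1 := Real.logb_self_eq_one hb
    exact tendsto_of_tendsto_of_tendsto_of_le_of_le' hlog tendsto_const_nhds hlower hupper
end
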